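/- Let G be a discrete group, I a nonempty set, S = B(I,G) the Brandt semigroup, and T = I×G×I. Define u : ℓ¹(T) → ℓ¹(S) by u(b)(t) = b(t) for t ∈ T and u(b)(∘) = −Σ_{s∈T} b(s); define v : ℓ¹(S) → ℂ by v(a) = Σ_{s∈S} a(s); define w : ℓ¹(S) → ℓ¹(T) by w(a) = a|_T. Then u, v, w are continuous algebra homomorphisms, the sequence 0 → ℓ¹(T) →^u ℓ¹(S) →^v ℂ → 0 is exact, and w ∘ u = id_{ℓ¹(T)}. -/

import Mathlib

open scoped TensorProduct BigOperators ENNReal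
open Filter

noncomputable section

/-- `ℓ¹(X)`: the Banach space of absolutely summable complex functions on `X`. -/
abbrev L1 (X : Type) : Type := lp (fun _ : X => ℂ) 1

open Classical in
/-- The point mass `δ_x` in `ℓ¹(X)`. -/
noncomputable def delta {X : Type} (x : X) : L1 X := lp.single 1 x (1 : ℂ)

/-- The Brandt semigroup `B(I,G) = (I × G × I) ∪ {∘}`, with `∘ = none`. -/
abbrev Brandt (I G : Type) : Type := Option (I × G × I)

open Classical in
/-- Multiplication of the Brandt semigroup: `(i,g,j)(i',g',j') = (i,gg',j')` if
`j = i'` and `∘` otherwise; `∘` is absorbing. -/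
noncomputable instance {I G : Type} [Mul G] : Mul (Brandt I G) :=
  ⟨fun a b => match a, b with
    | some (i, g, j), some (i', g', j') => if j = i' then some (i, g * g', j') else none
    | _, _ => none⟩

open Classical in
/-- The convolution product on `ℓ¹(S)` for a (semi)group `S`:
`(a * b)(s) = ∑_{uv = s} a(u) b(v)`. -/
noncomputable def l1conv {S : Type} [Mul S] (a b : L1 S) (s : S) : ℂ :=
  ∑' p : S × S, if p.1 * p.2 = s then a p.1 * b p.2 else 0

/-!
Write `S = Option T`. Convolution on `ℓ¹(S)` is the pushforward along multiplication of the
outer product `a ⊗ b ∈ ℓ¹(S × S)`, so summation `v` is multiplicative. The map `u` is a linear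
isomorphism of `ℓ¹(T)` onto the sum-zero elements `ker v`, with inverse the restriction `w`.
Since `∘` is absorbing, a product lies in `T` only when both factors do, so `w (a * b)` depends
only on `w a` and `w b`. Defining the product on `ℓ¹(T)` as `w (u a * u b)` therefore makes `w`
multiplicative, and `u` is multiplicative because `u a * u b` again has sum zero.
-/

namespace L1

variable {X Y : Type}

lemma summable_norm (a : L1 X) : Summable fun x => ‖a x‖ := by
  simpa using (lp.memℓp a).summable (by norm_num : (0 : ℝ) < (1 : ℝ≥0∞).toReal)

lemma summable (a : L1 X) : Summable fun x => a x :=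
  (summable_norm a).of_norm

lemma norm_eq_tsum_norm (a : L1 X) : ‖a‖ = ∑' x, ‖a x‖ := by
  simpa using lp.norm_eq_tsum_rpow (by norm_num : (0 : ℝ) < (1 : ℝ≥0∞).toReal) a

lemma memℓp_one_of_summable_norm {f : X → ℂ} (hf : Summable fun x => ‖f x‖) :
    Memℓp f 1 :=
  memℓp_gen (by simpa using hf)

variable (X) in
def sumCLM : L1 X →L[ℂ] ℂ :=
  LinearMap.mkContinuous
    { toFun := fun a => ∑' x, a x
      map_add' := fun a b => (summable a).tsum_add (summable b)
      map_smul' := fun _ _ => tsum_mul_left }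
    1 fun a => by
      show ‖∑' x, a x‖ ≤ 1 * ‖a‖
      rw [one_mul, norm_eq_tsum_norm]
      exact norm_tsum_le_tsum_norm (summable_norm a)

lemma sumCLM_apply (a : L1 X) : sumCLM X a = ∑' x, a x := rfl

lemma sumCLM_surjective [Nonempty X] : Function.Surjective (sumCLM X) := by
  classical
  intro c
  refine ⟨c • delta (Classical.arbitrary X), ?_⟩
  rw [map_smul, sumCLM_apply, delta, lp.coeFn_single, tsum_pi_single, smul_eq_mul, mul_one]

def compCLM (f : Y → X) (hf : f.Injective) : L1 X →L[ℂ] L1 Y :=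
  LinearMap.mkContinuous
    { toFun := fun a =>
        ⟨fun y => a (f y), memℓp_one_of_summable_norm ((summable_norm a).comp_injective hf)⟩
      map_add' := fun _ _ => rfl
      map_smul' := fun _ _ => rfl }
    1 fun a => by
      rw [one_mul, norm_eq_tsum_norm, norm_eq_tsum_norm]
      exact tsum_comp_le_tsum_of_inj (summable_norm a) (fun _ => norm_nonneg _) hf

lemma compCLM_apply (f : Y → X) (hf : f.Injective) (a : L1 X) (y : Y) :
    compCLM f hf a y = a (f y) := rfl

def outerProd (a : L1 X) (b : L1 Y) : L1 (X × Y) :=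
  ⟨fun p => a p.1 * b p.2,
    memℓp_one_of_summable_norm ((summable_norm a).mul_norm (summable_norm b))⟩

lemma norm_outerProd (a : L1 X) (b : L1 Y) : ‖outerProd a b‖ = ‖a‖ * ‖b‖ := by
  simp only [norm_eq_tsum_norm, outerProd, norm_mul]
  exact (tsum_mul_tsum_of_summable_norm (f := fun x => ‖a x‖) (g := fun y => ‖b y‖)
    (by simpa using summable_norm a) (by simpa using summable_norm b)).symm

def outerProdCLM : L1 X →L[ℂ] L1 Y →L[ℂ] L1 (X × Y) :=
  LinearMap.mkContinuous₂
    (LinearMap.mk₂ ℂ outerProd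
      (fun _ _ _ => lp.ext <| funext fun _ => add_mul _ _ _)
      (fun _ _ _ => lp.ext <| funext fun _ => mul_assoc _ _ _)
      (fun _ _ _ => lp.ext <| funext fun _ => mul_add _ _ _)
      (fun _ _ _ => lp.ext <| funext fun _ => mul_left_comm _ _ _))
    1 fun a b => by simp [norm_outerProd]

lemma sumCLM_outerProdCLM (a : L1 X) (b : L1 Y) :
    sumCLM (X × Y) (outerProdCLM a b) = sumCLM X a * sumCLM Y b :=
  (tsum_mul_tsum_of_summable_norm (summable_norm a) (summable_norm b)).symm

lemma hasSum_tsum_fiber_norm (f : X → Y) (a : L1 X) :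
    HasSum (fun y => ∑' x : f ⁻¹' {y}, ‖a x‖) ‖a‖ := by
  rw [norm_eq_tsum_norm]
  exact (summable_norm a).hasSum.tsum_fiberwise f

lemma norm_tsum_fiber_le (f : X → Y) (a : L1 X) (y : Y) :
    ‖∑' x : f ⁻¹' {y}, a x‖ ≤ ∑' x : f ⁻¹' {y}, ‖a x‖ :=
  norm_tsum_le_tsum_norm ((summable_norm a).subtype _)

def pushforward (f : X → Y) (a : L1 X) : L1 Y :=
  ⟨fun y => ∑' x : f ⁻¹' {y}, a x, memℓp_one_of_summable_norm <|
    (hasSum_tsum_fiber_norm f a).summable.of_nonneg_of_le (fun _ => norm_nonneg _)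
      (norm_tsum_fiber_le f a)⟩

lemma norm_pushforward_le (f : X → Y) (a : L1 X) : ‖pushforward f a‖ ≤ ‖a‖ := by
  rw [norm_eq_tsum_norm]
  exact hasSum_le (norm_tsum_fiber_le f a) (summable_norm (pushforward f a)).hasSum
    (hasSum_tsum_fiber_norm f a)

def pushforwardCLM (f : X → Y) : L1 X →L[ℂ] L1 Y :=
  LinearMap.mkContinuous
    { toFun := pushforward f
      map_add' := fun a b => lp.ext <| funext fun _ =>
        ((summable a).subtype _).tsum_add ((summable b).subtype _)
      map_smul' := fun _ _ => lp.ext <| funext fun _ => tsum_mul_left }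
    1 fun a => by simpa using norm_pushforward_le f a

lemma sumCLM_pushforwardCLM (f : X → Y) (a : L1 X) :
    sumCLM Y (pushforwardCLM f a) = sumCLM X a :=
  ((summable a).hasSum.tsum_fiberwise f).tsum_eq

variable (S : Type) [Mul S]

def convCLM : L1 S →L[ℂ] L1 S →L[ℂ] L1 S :=
  (ContinuousLinearMap.compL ℂ (L1 S) (L1 (S × S)) (L1 S)
    (pushforwardCLM fun p : S × S => p.1 * p.2)).comp outerProdCLM

variable {S}

lemma convCLM_apply (a b : L1 S) (s : S) : convCLM S a b s = l1conv a b s := by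
  classical
  exact (tsum_subtype _ fun p : S × S => a p.1 * b p.2).trans
    (tsum_congr fun p => by simp [Set.indicator_apply])

lemma sumCLM_convCLM (a b : L1 S) :
    sumCLM S (convCLM S a b) = sumCLM S a * sumCLM S b :=
  (sumCLM_pushforwardCLM _ _).trans (sumCLM_outerProdCLM a b)

end L1

lemma hasSum_option_iff {X M : Type*} [AddCommGroup M] [TopologicalSpace M]
    [IsTopologicalAddGroup M] {f : Option X → M} {m : M} :
    HasSum f m ↔ HasSum (fun x => f (some x)) (m - f none) := by
  classical
  have hsome : (fun x => f (some x)) = Function.update f none 0 ∘ some :=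
    funext fun x => (Function.update_of_ne (Option.some_ne_none x) _ _).symm
  have hzero : ∀ s ∉ Set.range (some : X → Option X), Function.update f none 0 s = 0 := by
    rintro (_ | x) hs
    · exact Function.update_self _ _ _
    · exact absurd ⟨x, rfl⟩ hs
  rw [hsome, (Option.some_injective X).hasSum_iff hzero]
  refine ⟨fun h => by simpa [sub_eq_neg_add] using h.update none 0, fun h => ?_⟩
  simpa using h.update none (f none)

namespace L1

variable {X : Type}

lemma summable_norm_option_elim (c : ℂ) (b : L1 X) :
    Summable fun s : Option X => ‖s.elim c b‖ :=
  (hasSum_option_iff (m := ‖c‖ + ∑' x, ‖b x‖)).2 (by simpa using (summable_norm b).hasSum)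
    |>.summable

def extendSumZero (b : L1 X) : L1 (Option X) :=
  ⟨fun s => s.elim (-∑' x, b x) b,
    memℓp_one_of_summable_norm (summable_norm_option_elim _ b)⟩

lemma norm_extendSumZero_le (b : L1 X) : ‖extendSumZero b‖ ≤ 2 * ‖b‖ := by
  have hsum : HasSum (fun s => ‖extendSumZero b s‖) (‖∑' x, b x‖ + ‖b‖) :=
    hasSum_option_iff.2 (by simpa [extendSumZero, norm_eq_tsum_norm] using (summable_norm b).hasSum)
  rw [norm_eq_tsum_norm, hsum.tsum_eq, two_mul, add_le_add_iff_right, norm_eq_tsum_norm]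
  exact norm_tsum_le_tsum_norm (summable_norm b)

variable (X) in
abbrev restrictSomeCLM : L1 (Option X) →L[ℂ] L1 X :=
  compCLM some (Option.some_injective X)

variable (X) in
def extendSumZeroCLM : L1 X →L[ℂ] L1 (Option X) :=
  LinearMap.mkContinuous
    { toFun := extendSumZero
      map_add' := fun a b => lp.ext <| funext <| by
        rintro (_ | x)
        · show -∑' x, (a x + b x) = -∑' x, a x + -∑' x, b x
          rw [(summable a).tsum_add (summable b), neg_add]
        · rfl
      map_smul' := fun c a => lp.ext <| funext <| by
        rintro (_ | x)
        · show -∑' x, c * a x = c * -∑' x, a x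
          rw [tsum_mul_left, mul_neg]
        · rfl }
    2 norm_extendSumZero_le

lemma extendSumZeroCLM_some (b : L1 X) (x : X) : extendSumZeroCLM X b (some x) = b x := rfl

lemma extendSumZeroCLM_none (b : L1 X) : extendSumZeroCLM X b none = -∑' x, b x := rfl

lemma restrictSomeCLM_extendSumZeroCLM (b : L1 X) :
    restrictSomeCLM X (extendSumZeroCLM X b) = b := rfl

lemma sumCLM_extendSumZeroCLM (b : L1 X) : sumCLM (Option X) (extendSumZeroCLM X b) = 0 :=
  (hasSum_option_iff.2 <| by
    simpa [extendSumZeroCLM_some, extendSumZeroCLM_none] using (summable b).hasSum).tsum_eq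

lemma extendSumZeroCLM_restrictSomeCLM {a : L1 (Option X)} (ha : sumCLM (Option X) a = 0) :
    extendSumZeroCLM X (restrictSomeCLM X a) = a := by
  have hsome : HasSum (fun x => a (some x)) (0 - a none) :=
    hasSum_option_iff.1 (ha ▸ (summable a).hasSum)
  refine lp.ext <| funext ?_
  rintro (_ | x)
  · simp [extendSumZeroCLM_none, compCLM_apply, hsome.tsum_eq]
  · rfl

lemma range_extendSumZeroCLM :
    LinearMap.range (extendSumZeroCLM X : L1 X →ₗ[ℂ] L1 (Option X)) =
      LinearMap.ker (sumCLM (Option X) : L1 (Option X) →ₗ[ℂ] ℂ) := by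
  ext a
  exact ⟨fun ⟨b, hb⟩ => hb ▸ sumCLM_extendSumZeroCLM b,
    fun ha => ⟨_, extendSumZeroCLM_restrictSomeCLM ha⟩⟩

end L1

namespace Brandt

variable {I G : Type}

lemma exists_eq_some_of_mul_eq_some [Mul G] {p q : Brandt I G} {t : I × G × I}
    (h : p * q = some t) : ∃ t₁ t₂, p = some t₁ ∧ q = some t₂ := by
  rcases p with _ | t₁ <;> rcases q with _ | t₂
  · exact absurd h nofun
  · exact absurd h nofun
  · exact absurd h nofun
  · exact ⟨t₁, t₂, rfl, rfl⟩

lemma mul_eq_some_iff [Group G] {p q : Brandt I G} {i j : I} {g : G} :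
    p * q = some (i, g, j) ↔ ∃ k h, p = some (i, g * h⁻¹, k) ∧ q = some (k, h, j) := by
  classical
  constructor
  · intro hpq
    obtain ⟨⟨i₁, g₁, j₁⟩, ⟨i₂, g₂, j₂⟩, rfl, rfl⟩ := exists_eq_some_of_mul_eq_some hpq
    change (if j₁ = i₂ then some (i₁, g₁ * g₂, j₂) else none) = _ at hpq
    split_ifs at hpq with hj
    obtain ⟨rfl, rfl, rfl⟩ : i₁ = i ∧ g₁ * g₂ = g ∧ j₂ = j := by simpa using hpq
    exact ⟨i₂, g₂, by simp [hj], rfl⟩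
  · rintro ⟨k, h, rfl, rfl⟩
    show (if k = k then some (i, g * h⁻¹ * h, j) else none) = _
    rw [if_pos rfl, inv_mul_cancel_right]

def mulFiberEquiv [Group G] (i : I) (g : G) (j : I) :
    I × G ≃ (fun p : Brandt I G × Brandt I G => p.1 * p.2) ⁻¹' {some (i, g, j)} :=
  Equiv.ofBijective
    (fun q => ⟨(some (i, g * q.2⁻¹, q.1), some (q.1, q.2, j)), mul_eq_some_iff.2 ⟨_, _, rfl, rfl⟩⟩)
    ⟨fun q q' hq => by
        obtain ⟨-, hq₂⟩ := Prod.ext_iff.1 (Subtype.ext_iff.1 hq)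
        simpa [Prod.ext_iff] using hq₂,
      fun ⟨_, hp⟩ => by
        obtain ⟨k, h, hp₁, hp₂⟩ := mul_eq_some_iff.1 hp
        exact ⟨(k, h), Subtype.ext (Prod.ext hp₁.symm hp₂.symm)⟩⟩

open L1

variable (I G) in
def matrixConv [Mul G] : L1 (I × G × I) →L[ℂ] L1 (I × G × I) →L[ℂ] L1 (I × G × I) :=
  (ContinuousLinearMap.compL ℂ _ _ _ (restrictSomeCLM (I × G × I))).comp
    ((convCLM (Brandt I G)).bilinearComp (extendSumZeroCLM _) (extendSumZeroCLM _))

lemma matrixConv_eq [Mul G] (a b : L1 (I × G × I)) :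
    matrixConv I G a b =
      restrictSomeCLM _ (convCLM _ (extendSumZeroCLM _ a) (extendSumZeroCLM _ b)) := rfl

lemma matrixConv_apply [Group G] (a b : L1 (I × G × I)) (i : I) (g : G) (j : I) :
    matrixConv I G a b (i, g, j) = ∑' p : I × G, a (i, g * p.2⁻¹, p.1) * b (p.1, p.2, j) :=
  ((mulFiberEquiv i g j).tsum_eq fun p =>
    extendSumZeroCLM _ a p.1.1 * extendSumZeroCLM _ b p.1.2).symm

lemma restrictSomeCLM_convCLM_congr [Mul G] {x x' y y' : L1 (Brandt I G)}
    (hx : restrictSomeCLM _ x = restrictSomeCLM _ x')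
    (hy : restrictSomeCLM _ y = restrictSomeCLM _ y') :
    restrictSomeCLM _ (convCLM _ x y) = restrictSomeCLM _ (convCLM _ x' y') := by
  refine lp.ext <| funext fun t => tsum_congr fun ⟨p, hp⟩ => ?_
  obtain ⟨t₁, t₂, hp₁, hp₂⟩ := exists_eq_some_of_mul_eq_some hp
  change x p.1 * y p.2 = x' p.1 * y' p.2
  rw [hp₁, hp₂]
  exact congr_arg₂ (· * ·) (congr_arg (fun a : L1 _ => a t₁) hx)
    (congr_arg (fun a : L1 _ => a t₂) hy)

lemma restrictSomeCLM_convCLM [Mul G] (x y : L1 (Brandt I G)) :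
    restrictSomeCLM _ (convCLM _ x y) =
      matrixConv I G (restrictSomeCLM _ x) (restrictSomeCLM _ y) := by
  rw [matrixConv_eq]
  exact restrictSomeCLM_convCLM_congr (restrictSomeCLM_extendSumZeroCLM _).symm
    (restrictSomeCLM_extendSumZeroCLM _).symm

lemma extendSumZeroCLM_matrixConv [Mul G] (a b : L1 (I × G × I)) :
    extendSumZeroCLM _ (matrixConv I G a b) =
      convCLM _ (extendSumZeroCLM _ a) (extendSumZeroCLM _ b) := by
  rw [matrixConv_eq]
  exact extendSumZeroCLM_restrictSomeCLM <| by
    rw [sumCLM_convCLM, sumCLM_extendSumZeroCLM, zero_mul]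

end Brandt

theorem brandt_morita_stmt7_general (I G : Type) [Group G] :
    ∃ (mulT : L1 (I × G × I) →L[ℂ] L1 (I × G × I) →L[ℂ] L1 (I × G × I))
      (mulS : L1 (Brandt I G) →L[ℂ] L1 (Brandt I G) →L[ℂ] L1 (Brandt I G)),
      -- `ℓ¹(T)` with `(ab)(i,g,j) = ∑_{k ∈ I, h ∈ G} a(i,gh⁻¹,k) b(k,h,j)`
      (∀ (a b : L1 (I × G × I)) (i : I) (g : G) (j : I),
        mulT a b (i, g, j) = ∑' p : I × G, a (i, g * p.2⁻¹, p.1) * b (p.1, p.2, j)) ∧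
      -- `ℓ¹(S)` with the semigroup convolution product
      (∀ (a b : L1 (Brandt I G)) (s : Brandt I G), mulS a b s = l1conv a b s) ∧
      ∃ (u : L1 (I × G × I) →L[ℂ] L1 (Brandt I G))
        (v : L1 (Brandt I G) →L[ℂ] ℂ)
        (w : L1 (Brandt I G) →L[ℂ] L1 (I × G × I)),
        (∀ (b : L1 (I × G × I)) (t : I × G × I), u b (some t) = b t) ∧
        (∀ b : L1 (I × G × I), u b (none : Brandt I G) = -∑' t : I × G × I, b t) ∧
        (∀ a : L1 (Brandt I G), v a = ∑' s : Brandt I G, a s) ∧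
        (∀ (a : L1 (Brandt I G)) (t : I × G × I), w a t = a (some t)) ∧
        -- `u`, `v`, `w` are (continuous) algebra homomorphisms
        (∀ a b : L1 (I × G × I), u (mulT a b) = mulS (u a) (u b)) ∧
        (∀ a b : L1 (Brandt I G), v (mulS a b) = v a * v b) ∧
        (∀ a b : L1 (Brandt I G), w (mulS a b) = mulT (w a) (w b)) ∧
        -- exactness of `0 → ℓ¹(T) → ℓ¹(S) → ℂ → 0`
        Function.Injective ⇑u ∧
        LinearMap.range (u : L1 (I × G × I) →ₗ[ℂ] L1 (Brandt I G)) = LinearMap.ker (v : L1 (Brandt I G) →ₗ[ℂ] ℂ) ∧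
        Function.Surjective ⇑v ∧
        -- `w ∘ u = id`
        (∀ b : L1 (I × G × I), w (u b) = b) := by
  have hwu := L1.restrictSomeCLM_extendSumZeroCLM (X := I × G × I)
  exact ⟨Brandt.matrixConv I G, L1.convCLM _, Brandt.matrixConv_apply, L1.convCLM_apply,
    L1.extendSumZeroCLM _, L1.sumCLM _, L1.restrictSomeCLM _,
    L1.extendSumZeroCLM_some, L1.extendSumZeroCLM_none, L1.sumCLM_apply, fun _ _ => rfl,
    Brandt.extendSumZeroCLM_matrixConv, L1.sumCLM_convCLM, Brandt.restrictSomeCLM_convCLM,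
    Function.LeftInverse.injective hwu, L1.range_extendSumZeroCLM, L1.sumCLM_surjective, hwu⟩

/-- For the Brandt semigroup `S = B(I,G)` and `T = I×G×I`, the maps
`u : ℓ¹(T) → ℓ¹(S)` (`u(b)|_T = b`, `u(b)(∘) = -∑_{s∈T} b(s)`), `v : ℓ¹(S) → ℂ`
(`v(a) = ∑_s a(s)`) and `w : ℓ¹(S) → ℓ¹(T)` (`w(a) = a|_T`) are continuous algebra
homomorphisms, `0 → ℓ¹(T) → ℓ¹(S) → ℂ → 0` is exact, and `w ∘ u = id`. -/
theorem brandt_morita_stmt7 (I G : Type) [Nonempty I] [Group G] :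
    ∃ (mulT : L1 (I × G × I) →L[ℂ] L1 (I × G × I) →L[ℂ] L1 (I × G × I))
      (mulS : L1 (Brandt I G) →L[ℂ] L1 (Brandt I G) →L[ℂ] L1 (Brandt I G)),
      -- `ℓ¹(T)` with `(ab)(i,g,j) = ∑_{k ∈ I, h ∈ G} a(i,gh⁻¹,k) b(k,h,j)`
      (∀ (a b : L1 (I × G × I)) (i : I) (g : G) (j : I),
        mulT a b (i, g, j) = ∑' p : I × G, a (i, g * p.2⁻¹, p.1) * b (p.1, p.2, j)) ∧
      -- `ℓ¹(S)` with the semigroup convolution product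
      (∀ (a b : L1 (Brandt I G)) (s : Brandt I G), mulS a b s = l1conv a b s) ∧
      ∃ (u : L1 (I × G × I) →L[ℂ] L1 (Brandt I G))
        (v : L1 (Brandt I G) →L[ℂ] ℂ)
        (w : L1 (Brandt I G) →L[ℂ] L1 (I × G × I)),
        (∀ (b : L1 (I × G × I)) (t : I × G × I), u b (some t) = b t) ∧
        (∀ b : L1 (I × G × I), u b (none : Brandt I G) = -∑' t : I × G × I, b t) ∧
        (∀ a : L1 (Brandt I G), v a = ∑' s : Brandt I G, a s) ∧
        (∀ (a : L1 (Brandt I G)) (t : I × G × I), w a t = a (some t)) ∧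
        -- `u`, `v`, `w` are (continuous) algebra homomorphisms
        (∀ a b : L1 (I × G × I), u (mulT a b) = mulS (u a) (u b)) ∧
        (∀ a b : L1 (Brandt I G), v (mulS a b) = v a * v b) ∧
        (∀ a b : L1 (Brandt I G), w (mulS a b) = mulT (w a) (w b)) ∧
        -- exactness of `0 → ℓ¹(T) → ℓ¹(S) → ℂ → 0`
        Function.Injective ⇑u ∧
        LinearMap.range (u : L1 (I × G × I) →ₗ[ℂ] L1 (Brandt I G)) = LinearMap.ker (v : L1 (Brandt I G) →ₗ[ℂ] ℂ) ∧
        Function.Surjective ⇑v ∧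
        -- `w ∘ u = id`
        (∀ b : L1 (I × G × I), w (u b) = b) :=
  brandt_morita_stmt7_general I G
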